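/- arXiv:1105.5517 — 3 statements merged into one kernel-verified Lean document; each statement's English description precedes it below -/
import Mathlib

section
/- Let α be an element of F_{q^r} of degree r over F_q with monic minimal polynomial h(x) = x^r + c_{r−1}x^{r−1} + ... + c_0. Suppose there exists 0 < k ≤ r with gcd(k,p) = 1 and c_{r−k} ≠ 0, and let k be minimal with this property. Then the power sum of the conjugates satisfies Σ_{i=1}^r α_i^k = −k·c_{r−k} ≠ 0, and Σ_{i=1}^r α_i^j = 0 for all 0 < j < k, where α_1, ..., α_r are the conjugates of α over F_q. -/
/-!
The Frobenius `x ↦ x ^ q` permutes the conjugates `α ^ q ^ i` (`i < r`) cyclically, so the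
coefficients of `∏ (X - α ^ q ^ i)` are fixed by it and lie in `F`; this monic polynomial of
degree `r` with root `α` is therefore the minimal polynomial, and Vieta gives
`c_{r-j} = (-1) ^ j e_j`. Newton's identity
`p_m = (-1) ^ (m + 1) m e_m - ∑_{0<i<m} (-1) ^ i e_i p_{m-i}` then shows by induction that
`p_j = 0` for `0 < j < k` and `p_k = (-1) ^ (k + 1) k e_k`, because each `j e_j` with `0 < j < k`
vanishes: either `c_{r-j} = 0`, or `p ∣ j`.
-/

open Polynomial IntermediateField Finset

namespace FiniteField

variable {F K : Type*} [Field F] [Fintype F] [Field K] [Algebra F K]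

/-- The `q` images of `F` already exhaust the roots of `X ^ q - X` in `K`. -/
theorem mem_range_algebraMap_of_pow_card_eq {x : K} (hx : x ^ Fintype.card F = x) :
    x ∈ Set.range (algebraMap F K) := by
  have hroots := roots_map_of_injective_of_card_eq_natDegree (algebraMap F K).injective
    (p := (X ^ Fintype.card F - X : F[X])) (by
      rw [roots_X_pow_card_sub_X, X_pow_card_sub_X_natDegree_eq F Fintype.one_lt_card]
      rfl)
  have hx' : x ∈ ((X ^ Fintype.card F - X : F[X]).map (algebraMap F K)).roots := by
    rw [mem_roots_map (X_pow_card_sub_X_ne_zero F Fintype.one_lt_card)]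
    simp [hx]
  rw [← hroots, roots_X_pow_card_sub_X, Multiset.mem_map] at hx'
  obtain ⟨a, -, ha⟩ := hx'
  exact ⟨a, ha⟩

theorem pow_card_pow_natDegree_minpoly {α : K} (hα : IsIntegral F α) :
    α ^ Fintype.card F ^ (minpoly F α).natDegree = α := by
  have := adjoin.finiteDimensional hα
  have : Finite F⟮α⟯ := Module.finite_of_finite F
  have : Fintype F⟮α⟯ := Fintype.ofFinite _
  have hcard : Fintype.card F⟮α⟯ = Fintype.card F ^ (minpoly F α).natDegree := by
    rw [Module.card_eq_pow_finrank (K := F), adjoin.finrank hα]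
  have hgen := pow_card (AdjoinSimple.gen F α)
  rw [hcard] at hgen
  simpa using congrArg (algebraMap F⟮α⟯ K) hgen

theorem map_minpoly_eq_prod_pow_card_pow {α : K} (hα : IsIntegral F α) :
    (minpoly F α).map (algebraMap F K) =
      ∏ i ∈ range (minpoly F α).natDegree, (X - C (α ^ Fintype.card F ^ i)) := by
  set r := (minpoly F α).natDegree
  set g : K[X] := ∏ i ∈ range r, (X - C (α ^ Fintype.card F ^ i))
  have hr : 0 < r := minpoly.natDegree_pos hα
  have hg_monic : g.Monic := monic_prod_of_monic _ _ fun i _ => monic_X_sub_C _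
  have hg_deg : g.natDegree = r := by
    rw [natDegree_prod_of_monic _ _ fun i _ => monic_X_sub_C (α ^ Fintype.card F ^ i)]
    simp only [natDegree_X_sub_C, sum_const, card_range, smul_eq_mul, mul_one]
  have hg_frob : g.map (frobeniusAlgHom F K : K →+* K) = g := by
    obtain ⟨m, hm⟩ : ∃ m, r = m + 1 := ⟨r - 1, by omega⟩
    have hcycle : α ^ Fintype.card F ^ (m + 1) = α ^ Fintype.card F ^ 0 := by
      rw [← hm, pow_zero, pow_one]; exact pow_card_pow_natDegree_minpoly hα
    simp only [g, Polynomial.map_prod, Polynomial.map_sub, map_X, map_C]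
    simp only [RingHom.coe_coe, frobeniusAlgHom_apply, ← pow_mul, ← pow_succ, hm]
    rw [prod_range_succ, prod_range_succ', hcycle]
  have hg_lifts : g ∈ lifts (algebraMap F K) := by
    refine (lifts_iff_coeff_lifts g).2 fun j => mem_range_algebraMap_of_pow_card_eq ?_
    simpa using congrArg (coeff · j) hg_frob
  obtain ⟨g₀, hmap, -, hmonic⟩ := lifts_and_degree_eq_and_monic hg_lifts hg_monic
  have hroot : aeval α g₀ = 0 := by
    rw [aeval_def, ← eval_map, hmap, eval_prod]
    exact prod_eq_zero (mem_range.2 hr) (by simp)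
  rw [← hmap, eq_of_monic_of_dvd_of_natDegree_le (minpoly.monic hα) hmonic
    (minpoly.dvd F α hroot)]
  rw [← natDegree_map_eq_of_injective (algebraMap F K).injective, hmap, hg_deg]

end FiniteField

namespace Finset

variable {ι R : Type*} [CommRing R] (s : Finset ι) (x : ι → R)

theorem coeff_prod_X_sub_C_card_sub {j : ℕ} (hj : j ≤ #s) :
    (∏ i ∈ s, (X - C (x i))).coeff (#s - j) = (-1) ^ j * (s.val.map x).esymm j := by
  have hprod : ∏ i ∈ s, (X - C (x i)) = ((s.val.map x).map fun t => X - C t).prod := by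
    rw [prod_eq_multiset_prod, Multiset.map_map]; rfl
  rw [hprod, Multiset.prod_X_sub_C_coeff _ (by simp), Multiset.card_map, card_val,
    Nat.sub_sub_self hj]

theorem sum_pow_eq_mul_esymm_sub_sum {m : ℕ} (hm : 0 < m) :
    ∑ i ∈ s, x i ^ m = (-1) ^ (m + 1) * m * (s.val.map x).esymm m -
      ∑ a ∈ antidiagonal m with a.1 ∈ Set.Ioo 0 m,
        (-1) ^ a.1 * (s.val.map x).esymm a.1 * ∑ i ∈ s, x i ^ a.2 := by
  have hpsum (n : ℕ) : MvPolynomial.aeval (fun i : s => x i) (MvPolynomial.psum s R n) =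
      ∑ i ∈ s, x i ^ n := by
    simp [MvPolynomial.psum, sum_attach s (fun i => x i ^ n)]
  have hesymm (n : ℕ) : MvPolynomial.aeval (fun i : s => x i) (MvPolynomial.esymm s R n) =
      (s.val.map x).esymm n := by
    rw [MvPolynomial.aeval_esymm_eq_multiset_esymm, univ_eq_attach, attach_val]
    exact congrArg (Multiset.esymm · n) (Multiset.attach_map_val' _ _)
  simpa only [map_sub, map_mul, map_sum, map_pow, map_natCast, map_neg, map_one, hpsum,
    hesymm] using congrArg (MvPolynomial.aeval fun i : s => x i)
      (MvPolynomial.psum_eq_mul_esymm_sub_sum s R m hm)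

theorem sum_pow_eq_mul_esymm_of_forall_lt {m : ℕ} (hm : 0 < m)
    (h : ∀ j, 0 < j → j < m → ∑ i ∈ s, x i ^ j = 0) :
    ∑ i ∈ s, x i ^ m = (-1) ^ (m + 1) * m * (s.val.map x).esymm m := by
  rw [sum_pow_eq_mul_esymm_sub_sum s x hm, sub_eq_self]
  refine sum_eq_zero fun a ha => ?_
  simp only [mem_filter, HasAntidiagonal.mem_antidiagonal, Set.mem_Ioo] at ha
  rw [h a.2 (by omega) (by omega), mul_zero]

variable {s x}

theorem sum_pow_eq_zero_of_natCast_mul_esymm_eq_zero {k : ℕ}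
    (h : ∀ j, 0 < j → j < k → (j : R) * (s.val.map x).esymm j = 0) :
    ∀ j, 0 < j → j < k → ∑ i ∈ s, x i ^ j = 0 := by
  intro j
  induction j using Nat.strong_induction_on with
  | _ j ih =>
    intro hj hjk
    rw [sum_pow_eq_mul_esymm_of_forall_lt s x hj fun l hl hlj => ih l hlj hl (hlj.trans hjk),
      mul_assoc, h j hj hjk, mul_zero]

theorem sum_pow_eq_mul_esymm_of_natCast_mul_esymm_eq_zero {k : ℕ} (hk : 0 < k)
    (h : ∀ j, 0 < j → j < k → (j : R) * (s.val.map x).esymm j = 0) :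
    ∑ i ∈ s, x i ^ k = (-1) ^ (k + 1) * k * (s.val.map x).esymm k :=
  sum_pow_eq_mul_esymm_of_forall_lt s x hk (sum_pow_eq_zero_of_natCast_mul_esymm_eq_zero h)

end Finset

/-- Let `α` be of degree `r` over `F_q` with monic minimal polynomial
`h = x^r + c_{r-1}x^{r-1} + ... + c_0`, and let `k` be minimal with `0 < k ≤ r`,
`gcd(k,p) = 1` and `c_{r-k} ≠ 0`. Then the `k`-th power sum of the conjugates
`α, α^q, ..., α^{q^{r-1}}` equals `-k·c_{r-k} ≠ 0`, and the `j`-th power sums vanish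
for `0 < j < k`. -/
theorem power_sums_of_conjugates (p n q r : ℕ) [Fact p.Prime] (hq : q = p ^ n)
    (F K : Type*) [Field F] [Field K] [Fintype F] [Algebra F K]
    (hF : Fintype.card F = q) (α : K) (hdeg : (minpoly F α).natDegree = r)
    (k : ℕ) (hk0 : 0 < k) (hkr : k ≤ r) (hkp : Nat.Coprime k p)
    (hc : (minpoly F α).coeff (r - k) ≠ 0)
    (hmin : ∀ j, 0 < j → j < k → Nat.Coprime j p → (minpoly F α).coeff (r - j) = 0) :
    (∑ i ∈ Finset.range r, (α ^ q ^ i) ^ k =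
      -(k : K) * algebraMap F K ((minpoly F α).coeff (r - k))) ∧
    -(k : K) * algebraMap F K ((minpoly F α).coeff (r - k)) ≠ 0 ∧
    (∀ j, 0 < j → j < k → ∑ i ∈ Finset.range r, (α ^ q ^ i) ^ j = 0) := by
  have : CharP F p := charP_of_card_eq_prime_pow (hF.trans hq)
  have : CharP K p := charP_of_injective_algebraMap (algebraMap F K).injective p
  have hα : IsIntegral F α :=
    minpoly.ne_zero_iff.1 (ne_zero_of_natDegree_gt (hdeg ▸ hk0.trans_le hkr))
  set e := fun j => ((range r).val.map fun i => α ^ q ^ i).esymm j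
  have hcoeff (j : ℕ) (hj : j ≤ r) :
      algebraMap F K ((minpoly F α).coeff (r - j)) = (-1) ^ j * e j := by
    have hvieta := coeff_prod_X_sub_C_card_sub (range r) (fun i => α ^ q ^ i) (j := j) (by simpa)
    rw [card_range] at hvieta
    rw [← coeff_map, FiniteField.map_minpoly_eq_prod_pow_card_pow hα, hdeg, hF, hvieta]
  have hcast_eq_zero (j : ℕ) : (j : K) = 0 ↔ ¬ j.Coprime p := by
    rw [CharP.cast_eq_zero_iff K p, Nat.coprime_comm, (Fact.out : p.Prime).coprime_iff_not_dvd,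
      not_not]
  have hmul_esymm (j : ℕ) (hj : 0 < j) (hjk : j < k) : (j : K) * e j = 0 := by
    by_cases hjp : j.Coprime p
    · have := hcoeff j (by omega)
      rw [hmin j hj hjk hjp, map_zero, eq_comm, mul_eq_zero] at this
      rw [this.resolve_left (pow_ne_zero _ (neg_ne_zero.2 one_ne_zero)), mul_zero]
    · rw [(hcast_eq_zero j).2 hjp, zero_mul]
  refine ⟨?_, mul_ne_zero (neg_ne_zero.2 (mt (hcast_eq_zero k).1 (not_not.2 hkp)))
    ((_root_.map_ne_zero _).2 hc), sum_pow_eq_zero_of_natCast_mul_esymm_eq_zero hmul_esymm⟩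
  rw [sum_pow_eq_mul_esymm_of_natCast_mul_esymm_eq_zero hk0 hmul_esymm, hcoeff k hkr]
  ring
end

section
/- Let q be a power of a prime p and d a natural number with gcd(d,p) = 1. In the unit group G = (F_q[x]/(x^{d+1}))^×, the number of residue classes g mod x^{d+1} with g^p ≡ 1 (mod x^{d+1}) equals q^{d − ⌊d/p⌋}. -/
open Polynomial AdjoinRoot

theorem aux_card (F : Type*) [Field F] [Fintype F] (p d : ℕ) [Fact p.Prime] [CharP F p] :
    Nat.card {g : AdjoinRoot ((Polynomial.X : Polynomial F) ^ (d + 1)) // g ^ p = 1}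
      = Fintype.card F ^ (d - d / p) := by
  classical
  have hp : p.Prime := Fact.out
  have hppos : 0 < p := hp.pos
  obtain ⟨k, hk⟩ : ∃ k, d / p = k := ⟨_, rfl⟩
  rw [hk]
  have hkd : k ≤ d := by rw [← hk]; exact Nat.div_le_self d p
  have hkp : k * p ≤ d := by rw [← hk]; exact Nat.div_mul_le_self d p
  have hdlt : d < (k + 1) * p := by
    rw [← hk]; exact (Nat.div_lt_iff_lt_mul hppos).mp (Nat.lt_succ_self _)
  set Q : Polynomial F := (X : Polynomial F) ^ (d + 1) with hQ
  have hQm : Q.Monic := monic_X_pow _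
  have hQdeg : Q.degree = ((d + 1 : ℕ) : WithBot ℕ) := degree_X_pow _
  haveI hch : CharP (AdjoinRoot Q) p := by
    refine CharP.quotient' p _ (fun x hx => ?_)
    rw [Ideal.mem_span_singleton] at hx
    refine eq_zero_of_dvd_of_degree_lt hx ?_
    rw [← map_natCast (C : F →+* Polynomial F) x, hQdeg]
    exact degree_C_le.trans_lt (by exact_mod_cast Nat.succ_pos d)
  -- key characterization of p-th roots of unity
  have key : ∀ f : Polynomial F, f.natDegree < d + 1 →
      ((AdjoinRoot.mk Q f) ^ p = 1 ↔
        (f.coeff 0 = 1 ∧ ∀ i, 1 ≤ i → i ≤ k → f.coeff i = 0)) := by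
    intro f hdeg
    constructor
    · intro hpow
      have hsum : f = ∑ i ∈ Finset.range (d + 1), monomial i (f.coeff i) :=
        as_sum_range' f (d + 1) hdeg
      have hfp : f ^ p = ∑ i ∈ Finset.range (d + 1), monomial (i * p) (f.coeff i ^ p) := by
        conv_lhs => rw [hsum]
        rw [sum_pow_char]
        exact Finset.sum_congr rfl fun i _ => monomial_pow i (f.coeff i) p
      set u : Polynomial F := ∑ i ∈ Finset.range (k + 1), monomial (i * p) (f.coeff i ^ p)
        with hu
      have hmku : AdjoinRoot.mk Q (f ^ p) = AdjoinRoot.mk Q u := by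
        rw [hfp, map_sum, map_sum]
        refine (Finset.sum_subset (Finset.range_subset_range.mpr (by omega))
          (fun i hi hni => ?_)).symm
        rw [AdjoinRoot.mk_eq_zero, ← C_mul_X_pow_eq_monomial]
        refine Dvd.dvd.mul_left ?_ _
        exact pow_dvd_pow X (by
          simp only [Finset.mem_range] at hi hni
          calc d + 1 ≤ (k + 1) * p := hdlt
          _ ≤ i * p := Nat.mul_le_mul_right p (by omega))
      have hu1 : u = 1 := by
        have h0 : AdjoinRoot.mk Q (u - 1) = 0 := by
          rw [map_sub, ← hmku, map_one, map_pow, hpow, sub_self]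
        rw [AdjoinRoot.mk_eq_zero] at h0
        have hdegu : u.degree ≤ (d : WithBot ℕ) := by
          refine (degree_sum_le _ _).trans (Finset.sup_le fun i hi => ?_)
          refine (degree_monomial_le _ _).trans ?_
          simp only [Finset.mem_range] at hi
          exact_mod_cast Nat.le_trans (Nat.mul_le_mul_right p (by omega)) hkp
        have hz := eq_zero_of_dvd_of_degree_lt h0 (by
          rw [hQdeg]
          refine (degree_sub_le _ _).trans_lt ?_
          refine max_lt (hdegu.trans_lt ?_) (degree_one.trans_lt ?_)
          · exact_mod_cast Nat.lt_succ_self d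
          · exact_mod_cast Nat.succ_pos d)
        exact sub_eq_zero.mp hz
      have hc : ∀ i₀, i₀ ≤ k → f.coeff i₀ ^ p = (1 : Polynomial F).coeff (i₀ * p) := by
        intro i₀ hi₀
        rw [← hu1, hu, finset_sum_coeff]
        rw [Finset.sum_eq_single i₀]
        · rw [coeff_monomial, if_pos rfl]
        · intro i _ hne
          rw [coeff_monomial, if_neg (fun hc => hne (Nat.eq_of_mul_eq_mul_right hppos hc))]
        · intro hni
          exact absurd (Finset.mem_range.mpr (by omega)) hni
      constructor
      · have h0 := hc 0 (Nat.zero_le k)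
        rw [Nat.zero_mul, coeff_one, if_pos rfl] at h0
        apply frobenius_inj F p
        rw [frobenius_def, frobenius_def, h0, one_pow]
      · intro i h1 h2
        have hi := hc i h2
        rw [coeff_one, if_neg (by positivity)] at hi
        exact pow_eq_zero_iff hp.ne_zero |>.mp hi
    · rintro ⟨h0, hlow⟩
      have hdvd : (X : Polynomial F) ^ (k + 1) ∣ (f - 1) := by
        rw [X_pow_dvd_iff]
        intro i hi
        rcases Nat.eq_zero_or_pos i with rfl | hipos
        · rw [coeff_sub, coeff_one, if_pos rfl, h0, sub_self]
        · rw [coeff_sub, coeff_one, if_neg (by omega), hlow i hipos (by omega), sub_zero]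
      have hsplit : AdjoinRoot.mk Q f = 1 + AdjoinRoot.mk Q (f - 1) := by
        rw [← map_one (AdjoinRoot.mk Q), ← map_add]
        ring_nf
      rw [hsplit, add_pow_char, one_pow, ← map_pow, AdjoinRoot.mk_eq_zero.mpr, add_zero]
      calc Q = X ^ (d + 1) := hQ
      _ ∣ X ^ ((k + 1) * p) := pow_dvd_pow X (by omega)
      _ ∣ (f - 1) ^ p := by
          rw [pow_mul]
          exact pow_dvd_pow_of_dvd hdvd p
  -- coefficient description of the candidate polynomials
  have hcoeff : ∀ (b : Fin (d - k) → F) (n : ℕ),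
      (1 + ∑ j : Fin (d - k), monomial (k + 1 + (j : ℕ)) (b j)).coeff n
        = if n = 0 then 1 else if h : k + 1 ≤ n ∧ n ≤ d then b ⟨n - (k + 1), by omega⟩
          else 0 := by
    intro b n
    rw [coeff_add, coeff_one, finset_sum_coeff]
    simp only [coeff_monomial]
    by_cases h0 : n = 0
    · subst h0
      rw [if_pos rfl, if_pos rfl, Finset.sum_eq_zero, add_zero]
      intro j _
      rw [if_neg (by omega)]
    · rw [if_neg h0, if_neg h0, zero_add]
      by_cases h1 : k + 1 ≤ n ∧ n ≤ d
      · rw [dif_pos h1]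
        have hjlt : n - (k + 1) < d - k := by omega
        rw [Finset.sum_eq_single (⟨n - (k + 1), hjlt⟩ : Fin (d - k))]
        · rw [if_pos (by simp only [Fin.val_mk]; omega)]
        · intro j _ hj
          refine if_neg fun hc => hj ?_
          apply Fin.ext
          simp only [Fin.val_mk]
          omega
        · intro h
          exact absurd (Finset.mem_univ _) h
      · rw [dif_neg h1, Finset.sum_eq_zero]
        intro j _
        have := j.isLt
        exact if_neg (by omega)
  have hdegb : ∀ b : Fin (d - k) → F,
      (1 + ∑ j : Fin (d - k), monomial (k + 1 + (j : ℕ)) (b j)).natDegree < d + 1 := by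
    intro b
    rw [Nat.lt_succ_iff]
    refine natDegree_le_iff_coeff_eq_zero.mpr fun m hm => ?_
    rw [hcoeff, if_neg (by omega), dif_neg (by omega)]
  -- the equivalence
  have e : {g : AdjoinRoot Q // g ^ p = 1} ≃ (Fin (d - k) → F) := by
    refine
      { toFun := fun g j => ((AdjoinRoot.modByMonicHom hQm) g.1).coeff (k + 1 + j)
        invFun := fun b => ⟨AdjoinRoot.mk Q
            (1 + ∑ j : Fin (d - k), monomial (k + 1 + (j : ℕ)) (b j)), ?_⟩
        left_inv := ?_
        right_inv := ?_ }
    · refine (key _ (hdegb b)).mpr ⟨?_, ?_⟩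
      · rw [hcoeff, if_pos rfl]
      · intro i h1 h2
        rw [hcoeff, if_neg (by omega), dif_neg (by omega)]
    · intro g
      apply Subtype.ext
      obtain ⟨f₀, hf₀⟩ := AdjoinRoot.mk_surjective g.1
      have hrep : (AdjoinRoot.modByMonicHom hQm) g.1 = f₀ %ₘ Q := by
        rw [← hf₀, AdjoinRoot.modByMonicHom_mk]
      have hmkrep : AdjoinRoot.mk Q ((AdjoinRoot.modByMonicHom hQm) g.1) = g.1 := by
        rw [hrep, ← hf₀]
        exact AdjoinRoot.mk_eq_mk.mpr ⟨-(f₀ /ₘ Q), by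
          linear_combination (modByMonic_add_div f₀ Q)⟩
      set f : Polynomial F := (AdjoinRoot.modByMonicHom hQm) g.1 with hf
      have hfdeg : f.natDegree < d + 1 := by
        rcases eq_or_ne f 0 with hz | hz
        · rw [hz]; simp
        · rw [natDegree_lt_iff_degree_lt hz]
          calc f.degree = (f₀ %ₘ Q).degree := by rw [hrep]
          _ < Q.degree := degree_modByMonic_lt f₀ hQm
          _ = _ := hQdeg
      have hcond := (key f hfdeg).mp (by rw [hmkrep]; exact g.2)
      show AdjoinRoot.mk Q (1 + ∑ j : Fin (d - k), monomial (k + 1 + (j : ℕ))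
          (f.coeff (k + 1 + (j : ℕ)))) = g.1
      rw [← hmkrep]
      congr 1
      ext nn
      rw [hcoeff (fun j => f.coeff (k + 1 + (j : ℕ)))]
      by_cases h0 : nn = 0
      · subst h0
        rw [if_pos rfl, hcond.1]
      · rw [if_neg h0]
        by_cases h1 : k + 1 ≤ nn ∧ nn ≤ d
        · rw [dif_pos h1]
          show f.coeff (k + 1 + (nn - (k + 1))) = f.coeff nn
          congr 1
          omega
        · rw [dif_neg h1]
          by_cases h2 : nn ≤ k
          · exact (hcond.2 nn (by omega) h2).symm
          · exact (coeff_eq_zero_of_natDegree_lt (by omega)).symm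
    · intro b
      funext j
      show (AdjoinRoot.modByMonicHom hQm (AdjoinRoot.mk Q
          (1 + ∑ j : Fin (d - k), monomial (k + 1 + (j : ℕ)) (b j)))).coeff (k + 1 + j) = b j
      rw [AdjoinRoot.modByMonicHom_mk, (modByMonic_eq_self_iff hQm).mpr]
      · rw [hcoeff, if_neg (by omega), dif_pos ⟨by omega, by
          have := j.isLt; omega⟩]
        congr 1
        apply Fin.ext
        simp only [Fin.val_mk]
        omega
      · rw [hQdeg]
        calc degree _ ≤ ((1 + ∑ j : Fin (d - k), monomial (k + 1 + (j : ℕ)) (b j)).natDegree :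
              WithBot ℕ) := degree_le_natDegree
        _ < ((d + 1 : ℕ) : WithBot ℕ) := by exact_mod_cast hdegb b
  rw [Nat.card_congr e, Nat.card_fun]
  simp [Nat.card_eq_fintype_card]



/-- In the ring `F_q[x]/(x^{d+1})` with `gcd(d,p) = 1`, the number of residue classes
`g` with `g^p = 1` equals `q^{d - ⌊d/p⌋}`; equivalently the `p`-torsion of the unit
group has this order. -/
theorem p_torsion_card_quotient_ring (p n q d : ℕ) [Fact p.Prime] (hq : q = p ^ n)
    (hd : Nat.Coprime d p)
    (F : Type*) [Field F] [Fintype F] (hF : Fintype.card F = q) :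
    Nat.card {g : Polynomial F ⧸ Ideal.span {(Polynomial.X : Polynomial F) ^ (d + 1)} //
        g ^ p = 1} = q ^ (d - d / p) := by
  have hp : p.Prime := Fact.out
  haveI hcF : CharP F p := by
    haveI : CharP F (ringChar F) := ringChar.charP F
    obtain ⟨m, hr, hcard⟩ := FiniteField.card F (ringChar F)
    have hdvd : ringChar F ∣ p ^ n := by
      rw [← hq, ← hF, hcard]
      exact dvd_pow_self _ (by exact_mod_cast m.pos.ne')
    have : ringChar F = p :=
      (Nat.prime_dvd_prime_iff_eq hr hp).mp (hr.dvd_of_dvd_pow hdvd)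
    rwa [this] at ‹CharP F (ringChar F)›
  have := aux_card F p d
  rw [hF] at this
  exact this
end

section
/- Let q be a power of an odd prime p, r < d natural numbers with gcd(d,p) = 1, ψ a nontrivial additive character of F_p, and let F_d denote the set of f = Σ a_i x^i ∈ F_q[x] of degree d with a_d ≠ 0 and a_i = 0 whenever p | i. For α, β nonzero elements of F_{q^r}, F_{q^s} respectively (r, s > 0, r + s < d) with distinct monic minimal polynomials g ≠ h over F_q, such that p·deg(g) ∤ r and p·deg(h) ∤ s, the average over f ∈ F_d of ψ(Tr_{F_{q^r}/F_p} f(α) − Tr_{F_{q^s}/F_p} f(β)) equals 0. -/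
/-!
Translating `f` by `C c * X ^ m` with `m < d` and `p ∤ m` permutes the polynomials summed over and
multiplies every term by `ψ (Tr (c • α ^ m) - Tr (c • β ^ m))`, so the sum vanishes as soon as one
of these values is nonzero. Otherwise `Tr_{K₁/F} (α ^ m) = Tr_{K₂/F} (β ^ m)` for every `m < d`
prime to `p` (the trace form of `F/𝔽_p` is nondegenerate), hence for every `m < d`, because
`Tr (x ^ p) = Tr x ^ p`. In an algebraic closure, `Tr_{K₁/F} (α ^ m) = [K₁ : F⟮α⟯] • ∑ z ^ m` over
the roots `z` of `g = minpoly F α`. The roots of `g` and of `h` are nonzero, no root is shared, and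
there are at most `r + s < d` of them, so a Vandermonde argument forces `[K₁ : F⟮α⟯] = r / deg g` to vanish
in characteristic `p`, i.e. `p * deg g ∣ r`.
-/

open Finset Polynomial IntermediateField Module Algebra

theorem AddChar.sum_eq_zero_of_add_mem_iff {G R : Type*} [AddGroup G] [CommRing R]
    [NoZeroDivisors R] (ψ : AddChar G R) {S : Finset G} {v : G} (hS : ∀ f, f + v ∈ S ↔ f ∈ S)
    (hv : ψ v ≠ 1) : ∑ f ∈ S, ψ f = 0 := by
  have hshift : ∑ f ∈ S, ψ f * ψ v = ∑ f ∈ S, ψ f :=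
    sum_equiv (Equiv.addRight v) (fun f => (hS f).symm) fun f _ => (map_add_eq_mul ψ f v).symm
  rw [← sum_mul] at hshift
  have : (∑ f ∈ S, ψ f) * (ψ v - 1) = 0 := by rw [mul_sub, mul_one, hshift, sub_self]
  exact (mul_eq_zero.mp this).resolve_right (sub_ne_zero.mpr hv)

theorem Polynomial.add_C_mul_X_pow_mem_iff {R : Type*} [Ring R] {p d m : ℕ} (hmd : m < d)
    (hpm : ¬ p ∣ m) (c : R) (f : R[X]) :
    ((f + C c * X ^ m).natDegree = d ∧ f + C c * X ^ m ≠ 0 ∧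
        ∀ i, p ∣ i → (f + C c * X ^ m).coeff i = 0) ↔
      (f.natDegree = d ∧ f ≠ 0 ∧ ∀ i, p ∣ i → f.coeff i = 0) := by
  have hne : ∀ g : R[X], g.natDegree = d → g ≠ 0 := fun g hg h0 => by
    rw [h0, natDegree_zero] at hg; omega
  suffices key : ∀ (c : R) (f : R[X]), f.natDegree = d → (∀ i, p ∣ i → f.coeff i = 0) →
      (f + C c * X ^ m).natDegree = d ∧ ∀ i, p ∣ i → (f + C c * X ^ m).coeff i = 0 by
    refine ⟨fun ⟨hd, _, hco⟩ => ?_, fun ⟨hd, _, hco⟩ => ?_⟩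
    · obtain ⟨hd', hco'⟩ := key (-c) _ hd hco
      rw [C_neg, neg_mul, add_neg_cancel_right] at hd' hco'
      exact ⟨hd', hne f hd', hco'⟩
    · obtain ⟨hd', hco'⟩ := key c f hd hco
      exact ⟨hd', hne _ hd', hco'⟩
  intro c f hd hco
  refine ⟨?_, fun i hi => ?_⟩
  · rw [natDegree_add_eq_left_of_natDegree_lt ((natDegree_C_mul_X_pow_le c m).trans_lt
      (hd ▸ hmd)), hd]
  · rw [coeff_add, coeff_C_mul_X_pow, if_neg (fun h : i = m => hpm (h ▸ hi)), add_zero, hco i hi]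

theorem trace_eq_of_forall_trace_smul_eq {k F L₁ L₂ : Type*} [Field k] [Field F] [Field L₁]
    [Field L₂] [Algebra k F] [Algebra F L₁] [Algebra F L₂] [Algebra k L₁] [Algebra k L₂]
    [IsScalarTower k F L₁] [IsScalarTower k F L₂] [FiniteDimensional k F]
    [Algebra.IsSeparable k F] [FiniteDimensional F L₁] [FiniteDimensional F L₂]
    {x₁ : L₁} {x₂ : L₂} (h : ∀ c : F, trace k L₁ (c • x₁) = trace k L₂ (c • x₂)) :
    trace F L₁ x₁ = trace F L₂ x₂ := by
  refine sub_eq_zero.mp ((traceForm_nondegenerate k F).1 _ fun c => ?_)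
  rw [traceForm_apply, sub_mul, map_sub, mul_comm, mul_comm _ c, ← smul_eq_mul, ← smul_eq_mul,
    ← map_smul, ← map_smul, trace_trace, trace_trace, h, sub_self]

theorem Algebra.trace_pow_char {K L : Type*} [Field K] [Field L] [Algebra K L]
    [FiniteDimensional K L] [Algebra.IsSeparable K L] (p : ℕ) [ExpChar K p] (x : L) :
    trace K L (x ^ p) = trace K L x ^ p := by
  have := expChar_of_injective_algebraMap (algebraMap K (AlgebraicClosure K)).injective p
  apply (algebraMap K (AlgebraicClosure K)).injective
  rw [trace_eq_sum_embeddings, map_pow (algebraMap K _), trace_eq_sum_embeddings, sum_pow_char]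
  simp only [map_pow]

theorem trace_pow_eq_of_forall_not_dvd {K L₁ L₂ : Type*} [Field K] [Field L₁] [Field L₂]
    [Algebra K L₁] [Algebra K L₂] [FiniteDimensional K L₁] [FiniteDimensional K L₂]
    [Algebra.IsSeparable K L₁] [Algebra.IsSeparable K L₂] {p : ℕ} [Fact p.Prime] [CharP K p]
    {x₁ : L₁} {x₂ : L₂} {N : ℕ}
    (h : ∀ m ≤ N, ¬ p ∣ m → trace K L₁ (x₁ ^ m) = trace K L₂ (x₂ ^ m)) :
    ∀ m, 0 < m → m ≤ N → trace K L₁ (x₁ ^ m) = trace K L₂ (x₂ ^ m) := by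
  intro m
  induction m using Nat.strong_induction_on with
  | _ m ih =>
    intro hm hmN
    by_cases hpm : p ∣ m
    · obtain ⟨k, rfl⟩ := hpm
      have hk : 0 < k := Nat.pos_of_mul_pos_left hm
      have hkm : k < p * k := lt_mul_left hk (Fact.out : p.Prime).one_lt
      rw [mul_comm, pow_mul, pow_mul, trace_pow_char p, trace_pow_char p,
        ih k hkm hk (hkm.le.trans hmN)]
    · exact h m hmN hpm

theorem Finset.eq_zero_of_forall_sum_mul_pow_eq_zero {R : Type*} [CommRing R] [IsDomain R]
    {T : Finset R} (hT : (0 : R) ∉ T) {c : R → R}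
    (h : ∀ m, 0 < m → m ≤ #T → ∑ z ∈ T, c z * z ^ m = 0) {z : R} (hz : z ∈ T) : c z = 0 := by
  let e := T.equivFin.symm
  have hv : (fun i => c (e i) * e i) = 0 := by
    refine Matrix.eq_zero_of_forall_pow_sum_mul_pow_eq_zero (f := fun i => (e i : R))
      (Subtype.val_injective.comp e.injective) fun i => ?_
    have := h (i + 1) i.succ_pos i.isLt
    rw [← Finset.sum_coe_sort, ← e.sum_comp] at this
    simpa [pow_succ', mul_assoc] using this
  have := congrFun hv (e.symm ⟨z, hz⟩)
  simp only [Equiv.apply_symm_apply, Pi.zero_apply, mul_eq_zero] at this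
  exact this.resolve_right (ne_of_mem_of_not_mem hz hT)

theorem minpoly_eq_of_mem_aroots {K L Ω : Type*} [Field K] [Field L] [Field Ω] [Algebra K L]
    [Algebra K Ω] {x : L} (hx : IsIntegral K x) {z : Ω} (hz : z ∈ (minpoly K x).aroots Ω) :
    minpoly K z = minpoly K x :=
  (minpoly.eq_of_irreducible_of_monic (minpoly.irreducible hx) (mem_aroots.mp hz).2
    (minpoly.monic hx)).symm

theorem zero_notMem_aroots_minpoly {K L Ω : Type*} [Field K] [Field L] [Field Ω] [Algebra K L]
    [Algebra K Ω] {x : L} (hx : IsIntegral K x) (h0 : x ≠ 0) :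
    (0 : Ω) ∉ (minpoly K x).aroots Ω := fun h =>
  minpoly.coeff_zero_ne_zero hx h0 <| by
    simpa [← coeff_zero_eq_aeval_zero'] using (mem_aroots.mp h).2

theorem algebraMap_trace_pow_eq_finrank_smul_sum_aroots {K L Ω : Type*} [Field K] [Field L]
    [Field Ω] [DecidableEq Ω] [Algebra K L] [Algebra K Ω] [IsAlgClosed Ω] [FiniteDimensional K L]
    [Algebra.IsSeparable K L] (x : L) (m : ℕ) :
    algebraMap K Ω (trace K L (x ^ m)) =
      finrank K⟮x⟯ L • ∑ z ∈ ((minpoly K x).aroots Ω).toFinset, z ^ m := by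
  have hx := Algebra.IsSeparable.isIntegral K x
  have : Algebra.IsSeparable K K⟮x⟯ := Algebra.isSeparable_tower_bot_of_isSeparable K K⟮x⟯ L
  have hxm : x ^ m = algebraMap K⟮x⟯ L (AdjoinSimple.gen K x ^ m) := by simp
  rw [← trace_trace (S := K⟮x⟯), hxm, trace_algebraMap,
    LinearMap.map_smul_of_tower, map_nsmul, trace_eq_sum_embeddings (E := Ω)]
  congr 1
  rw [← (algHomAdjoinIntegralEquiv K hx).symm.sum_comp]
  simp only [map_pow, algHomAdjoinIntegralEquiv_symm_apply_gen]
  exact (Finset.sum_subtype _ (fun _ => Multiset.mem_toFinset) (· ^ m)).symm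

theorem ringChar_mul_natDegree_minpoly_dvd_finrank_of_trace_pow_eq {K L₁ L₂ : Type*} [Field K]
    [Field L₁] [Field L₂] [Algebra K L₁] [Algebra K L₂] [FiniteDimensional K L₁]
    [FiniteDimensional K L₂] [Algebra.IsSeparable K L₁] [Algebra.IsSeparable K L₂]
    {x₁ : L₁} {x₂ : L₂} (hx₁ : x₁ ≠ 0) (hx₂ : x₂ ≠ 0) (hne : minpoly K x₁ ≠ minpoly K x₂)
    (h : ∀ m, 0 < m → m ≤ finrank K L₁ + finrank K L₂ →
      trace K L₁ (x₁ ^ m) = trace K L₂ (x₂ ^ m)) :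
    ringChar K * (minpoly K x₁).natDegree ∣ finrank K L₁ := by
  classical
  let Ω := AlgebraicClosure K
  have hi₁ := Algebra.IsSeparable.isIntegral K x₁
  have hi₂ := Algebra.IsSeparable.isIntegral K x₂
  set R₁ := ((minpoly K x₁).aroots Ω).toFinset
  set R₂ := ((minpoly K x₂).aroots Ω).toFinset
  set a : Ω := (finrank K⟮x₁⟯ L₁ : Ω)
  set b : Ω := (finrank K⟮x₂⟯ L₂ : Ω)
  let c : Ω → Ω := fun z => (if z ∈ R₁ then a else 0) - (if z ∈ R₂ then b else 0)
  have hcard : #(R₁ ∪ R₂) ≤ finrank K L₁ + finrank K L₂ := by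
    refine (card_union_le _ _).trans (add_le_add ?_ ?_) <;>
      refine (Multiset.toFinset_card_le _).trans ?_ <;>
      rw [IsAlgClosed.card_aroots_eq_natDegree] <;> exact minpoly.natDegree_le _
  have h0 : (0 : Ω) ∉ R₁ ∪ R₂ := by
    simp only [mem_union, Multiset.mem_toFinset, R₁, R₂, not_or]
    exact ⟨zero_notMem_aroots_minpoly hi₁ hx₁, zero_notMem_aroots_minpoly hi₂ hx₂⟩
  have hsum : ∀ m, 0 < m → m ≤ #(R₁ ∪ R₂) → ∑ z ∈ R₁ ∪ R₂, c z * z ^ m = 0 := by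
    intro m hm hmT
    have := congrArg (algebraMap K Ω) (h m hm (hmT.trans hcard))
    rw [algebraMap_trace_pow_eq_finrank_smul_sum_aroots,
      algebraMap_trace_pow_eq_finrank_smul_sum_aroots, ← sub_eq_zero] at this
    simp only [c, sub_mul, ite_mul, zero_mul, sum_sub_distrib, ← sum_filter, ← mul_sum]
    rw [filter_mem_eq_inter, filter_mem_eq_inter, union_inter_cancel_left,
      union_inter_cancel_right]
    simpa [nsmul_eq_mul] using this
  obtain ⟨z, hz⟩ : R₁.Nonempty := by
    obtain ⟨z, hz⟩ := IsAlgClosed.exists_aeval_eq_zero Ω _ (minpoly.degree_pos hi₁).ne'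
    exact ⟨z, Multiset.mem_toFinset.mpr (mem_aroots.mpr ⟨minpoly.ne_zero hi₁, hz⟩)⟩
  have hz₂ : z ∉ R₂ := fun hz₂ => hne <| by
    rw [← minpoly_eq_of_mem_aroots hi₁ (Multiset.mem_toFinset.mp hz),
      minpoly_eq_of_mem_aroots hi₂ (Multiset.mem_toFinset.mp hz₂)]
  have ha : a = 0 := by
    simpa [c, hz, hz₂] using eq_zero_of_forall_sum_mul_pow_eq_zero h0 hsum (mem_union_left _ hz)
  have hchar : ringChar K ∣ finrank K⟮x₁⟯ L₁ :=
    (ringChar.spec K _).mp ((algebraMap K Ω).injective (by rw [map_natCast, map_zero]; exact ha))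
  rw [← Module.finrank_mul_finrank K K⟮x₁⟯ L₁, ← IntermediateField.adjoin.finrank hi₁, mul_comm]
  exact mul_dvd_mul_left _ hchar

theorem Module.finrank_eq_of_card_eq_pow {K V : Type*} [Field K] [Fintype K] [AddCommGroup V]
    [Module K V] [Fintype V] {r : ℕ} (h : Fintype.card V = Fintype.card K ^ r) :
    finrank K V = r :=
  Nat.pow_right_injective Fintype.one_lt_card (card_eq_pow_finrank.symm.trans h)

theorem average_two_point_character_sum_eq_zero_general (p n q r s d : ℕ) [Fact p.Prime]
    (hq : q = p ^ n) (hrsd : r + s < d)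
    (F K₁ K₂ : Type*) [Field F] [Field K₁] [Field K₂] [Fintype F] [Fintype K₁] [Fintype K₂]
    [Algebra F K₁] [Algebra F K₂] [Algebra (ZMod p) K₁] [Algebra (ZMod p) K₂]
    (hF : Fintype.card F = q) (hK₁ : Fintype.card K₁ = q ^ r) (hK₂ : Fintype.card K₂ = q ^ s)
    (α : K₁) (β : K₂) (hα : α ≠ 0) (hβ : β ≠ 0)
    (hgh : minpoly F α ≠ minpoly F β)
    (hga : ¬(p * (minpoly F α).natDegree ∣ r))
    (ψ : AddChar (ZMod p) ℂ) (hψ : ψ ≠ 1)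
    (S : Finset (Polynomial F))
    (hS : ∀ f : Polynomial F, f ∈ S ↔
      f.natDegree = d ∧ f ≠ 0 ∧ ∀ i, p ∣ i → f.coeff i = 0) :
    ∑ f ∈ S, ψ (Algebra.trace (ZMod p) K₁ (Polynomial.aeval α f) -
        Algebra.trace (ZMod p) K₂ (Polynomial.aeval β f)) = 0 := by
  have : CharP F p := charP_of_card_eq_prime_pow (hF.trans hq)
  let : Algebra (ZMod p) F := ZMod.algebra F p
  have : IsScalarTower (ZMod p) F K₁ := .of_algebraMap_eq' (RingHom.ext_zmod _ _)
  have : IsScalarTower (ZMod p) F K₂ := .of_algebraMap_eq' (RingHom.ext_zmod _ _)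
  have hrank₁ : finrank F K₁ = r := finrank_eq_of_card_eq_pow (by rw [hK₁, hF])
  have hrank₂ : finrank F K₂ = s := finrank_eq_of_card_eq_pow (by rw [hK₂, hF])
  obtain ⟨m, c, hmd, hpm, hc⟩ : ∃ m, ∃ c : F, m < d ∧ ¬ p ∣ m ∧
      trace (ZMod p) K₁ (c • α ^ m) ≠ trace (ZMod p) K₂ (c • β ^ m) := by
    by_contra! H
    refine hga ?_
    rw [← hrank₁, ← ringChar.eq F p]
    refine ringChar_mul_natDegree_minpoly_dvd_finrank_of_trace_pow_eq hα hβ hgh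
      (trace_pow_eq_of_forall_not_dvd fun m hm hpm =>
        trace_eq_of_forall_trace_smul_eq fun c => H m c (by omega) hpm)
  let L : F[X] →+ ZMod p :=
    (trace (ZMod p) K₁).toAddMonoidHom.comp (aeval α).toAddMonoidHom -
      (trace (ZMod p) K₂).toAddMonoidHom.comp (aeval β).toAddMonoidHom
  refine (ψ.compAddMonoidHom L).sum_eq_zero_of_add_mem_iff (v := C c * X ^ m)
    (fun f => by rw [hS, hS, add_C_mul_X_pow_mem_iff hmd hpm]) ?_
  simpa [L, (AddChar.IsPrimitive.of_ne_one hψ).zmod_char_eq_one_iff p, Algebra.smul_def,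
    sub_eq_zero] using hc

/-- Let `p > 2`, `q = p^n`, `gcd(d,p)=1`, and let `F_d` be the set of degree-`d`
polynomials over `F_q` whose coefficients vanish at all indices divisible by `p`.
For nonzero `α ∈ F_{q^r}`, `β ∈ F_{q^s}` (`r+s < d`) with distinct minimal polynomials
over `F_q` such that `p·deg(minpoly α) ∤ r` and `p·deg(minpoly β) ∤ s`, the average over
`f ∈ F_d` of `ψ(Tr_{F_{q^r}/F_p} f(α) - Tr_{F_{q^s}/F_p} f(β))` vanishes. -/
theorem average_two_point_character_sum_eq_zero (p n q r s d : ℕ) [Fact p.Prime]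
    (hp : 2 < p) (hq : q = p ^ n) (hdp : Nat.Coprime d p)
    (hr : 0 < r) (hs : 0 < s) (hrsd : r + s < d)
    (F K₁ K₂ : Type*) [Field F] [Field K₁] [Field K₂] [Fintype F] [Fintype K₁] [Fintype K₂]
    [Algebra F K₁] [Algebra F K₂] [Algebra (ZMod p) K₁] [Algebra (ZMod p) K₂]
    (hF : Fintype.card F = q) (hK₁ : Fintype.card K₁ = q ^ r) (hK₂ : Fintype.card K₂ = q ^ s)
    (α : K₁) (β : K₂) (hα : α ≠ 0) (hβ : β ≠ 0)
    (hgh : minpoly F α ≠ minpoly F β)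
    (hga : ¬(p * (minpoly F α).natDegree ∣ r))
    (hgb : ¬(p * (minpoly F β).natDegree ∣ s))
    (ψ : AddChar (ZMod p) ℂ) (hψ : ψ ≠ 1)
    (S : Finset (Polynomial F))
    (hS : ∀ f : Polynomial F, f ∈ S ↔
      f.natDegree = d ∧ f ≠ 0 ∧ ∀ i, p ∣ i → f.coeff i = 0) :
    ∑ f ∈ S, ψ (Algebra.trace (ZMod p) K₁ (Polynomial.aeval α f) -
        Algebra.trace (ZMod p) K₂ (Polynomial.aeval β f)) = 0 :=
  average_two_point_character_sum_eq_zero_general p n q r s d hq hrsd F K₁ K₂ hF hK₁ hK₂ α β hα hβ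
    hgh hga ψ hψ S hS
end
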